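/- Let Ψ be a k×(k+1) real matrix satisfying ΨΨᵀ = I_k and ΨᵀΨ = I_{k+1} − (1/(k+1))𝟙𝟙ᵀ. Define f(u) = c / (∑_{p=1}^{k+1} exp(uᵀΨ_{:,p}))^{k+1} for u ∈ ℝᵏ and a constant c > 0. Then for any permutation r of {1,…,k+1}, with A_r = ΨΨ_rᵀ, we have f(A_r u) = f(u) for all u ∈ ℝᵏ. -/
import Mathlib


open Matrix

theorem ilr_density_orthogonal_symmetry (k : ℕ) (Ψ : Matrix (Fin k) (Fin (k+1)) ℝ)
    (h1 : Ψ * Ψᵀ = 1)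
    (h2 : Ψᵀ * Ψ = 1 - (((k : ℝ) + 1)⁻¹) • Matrix.of (fun _ _ => (1 : ℝ)))
    (c : ℝ) (hc : 0 < c) (r : Equiv.Perm (Fin (k+1))) (u : Fin k → ℝ) :
    c / (∑ p : Fin (k+1), Real.exp (∑ i : Fin k,
        ((Ψ * (Ψ.submatrix id r)ᵀ).mulVec u) i * Ψ i p)) ^ (k+1)
      = c / (∑ p : Fin (k+1), Real.exp (∑ i : Fin k, u i * Ψ i p)) ^ (k+1) := by
  -- row sums of Ψ are zero
  have hJ : Ψ * Matrix.of (fun (_ _ : Fin (k+1)) => (1 : ℝ)) = 0 := by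
    have h3 : Ψ * (Ψᵀ * Ψ) = Ψ := by rw [← Matrix.mul_assoc, h1, Matrix.one_mul]
    rw [h2, Matrix.mul_sub, Matrix.mul_one, Matrix.mul_smul] at h3
    have h4 := sub_eq_self.mp h3
    have hk : ((k : ℝ) + 1)⁻¹ ≠ 0 := by positivity
    exact (smul_eq_zero.mp h4).resolve_left hk
  have hrow : ∀ j, ∑ q, Ψ j q = 0 := by
    intro j
    have := congrFun (congrFun hJ j) (0 : Fin (k+1))
    simpa [Matrix.mul_apply] using this
  have hinner : ∀ q p : Fin (k+1), ∑ i, Ψ i q * Ψ i p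
      = (if q = p then (1:ℝ) else 0) - ((k : ℝ) + 1)⁻¹ := by
    intro q p
    have := congrFun (congrFun h2 q) p
    simpa [Matrix.mul_apply, Matrix.one_apply, Matrix.sub_apply] using this
  have key : ∀ p : Fin (k+1), (∑ i : Fin k,
      ((Ψ * (Ψ.submatrix id r)ᵀ).mulVec u) i * Ψ i p) = ∑ j, u j * Ψ j (r p) := by
    intro p
    have step : ∀ i, ((Ψ * (Ψ.submatrix id r)ᵀ).mulVec u) i
        = ∑ j, (∑ q, Ψ i q * Ψ j (r q)) * u j := by
      intro i
      simp [Matrix.mulVec, Matrix.mul_apply, dotProduct, Matrix.submatrix_apply]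
    calc (∑ i : Fin k, ((Ψ * (Ψ.submatrix id r)ᵀ).mulVec u) i * Ψ i p)
        = ∑ i, (∑ j, (∑ q, Ψ i q * Ψ j (r q)) * u j) * Ψ i p := by
          simp_rw [step]
      _ = ∑ j, u j * ∑ q, Ψ j (r q) * (∑ i, Ψ i q * Ψ i p) := by
          simp only [Finset.sum_mul, Finset.mul_sum]
          rw [Finset.sum_comm]
          refine Finset.sum_congr rfl fun j _ => ?_
          rw [Finset.sum_comm]
          exact Finset.sum_congr rfl fun q _ => Finset.sum_congr rfl fun i _ => by ring
      _ = ∑ j, u j * ∑ q, Ψ j (r q) * ((if q = p then (1:ℝ) else 0) - ((k : ℝ) + 1)⁻¹) := by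
          simp_rw [hinner]
      _ = ∑ j, u j * (Ψ j (r p) - ((k : ℝ) + 1)⁻¹ * ∑ q, Ψ j (r q)) := by
          congr 1; ext j
          congr 1
          simp [mul_sub, sub_mul, ite_mul, Finset.sum_sub_distrib, Finset.mul_sum, mul_comm]
      _ = ∑ j, u j * Ψ j (r p) := by
          congr 1; ext j
          have : ∑ q, Ψ j (r q) = ∑ q, Ψ j q := Equiv.sum_comp r (fun q => Ψ j q)
          rw [this, hrow, mul_zero, sub_zero]
  have hperm : (∑ p : Fin (k+1), Real.exp (∑ i : Fin k,
      ((Ψ * (Ψ.submatrix id r)ᵀ).mulVec u) i * Ψ i p))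
      = ∑ p : Fin (k+1), Real.exp (∑ i : Fin k, u i * Ψ i p) := by
    calc (∑ p : Fin (k+1), Real.exp (∑ i : Fin k,
        ((Ψ * (Ψ.submatrix id r)ᵀ).mulVec u) i * Ψ i p))
        = ∑ p, Real.exp (∑ j, u j * Ψ j (r p)) := by simp_rw [key]
      _ = ∑ p, Real.exp (∑ j, u j * Ψ j p) :=
          Equiv.sum_comp r (fun p => Real.exp (∑ j, u j * Ψ j p))
  rw [hperm]
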